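/- Let p be an odd prime and let D ∈ Z_p satisfy D ≠ k² for every k ∈ Z_p. For a₀, a₁ ∈ Z_p define C_{a₀,a₁} = { (2b₀, a₀b₀ + a₁b₁D, 2b₁D, a₀b₁ + a₁b₀) : b₀, b₁ ∈ Z_p } and C_∞ = { (0, b₀, 0, b₁) : b₀, b₁ ∈ Z_p }, subsets of V₄(Z_p) = Z_p⁴. Then: (1) each of these p²+1 classes contains exactly p² vectors; (2) any two distinct classes intersect exactly in {(0,0,0,0)}; and (3) if w₁ and w₂ lie in the same class, then w₁ ∘ w₂ = 0. -/
import Mathlib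


/-- The symplectic product on `V₄(Z_p)`:
`(j,k,a,b) ∘ (j',k',a',b') = (kj' - jk') + (ba' - ab')`. -/
def symp4 (p : ℕ) (w w' : ZMod p × ZMod p × ZMod p × ZMod p) : ZMod p :=
  (w.2.1 * w'.1 - w.1 * w'.2.1) + (w.2.2.2 * w'.2.2.1 - w.2.2.1 * w'.2.2.2)

/-- The classes `C_{a₀,a₁}` (for `some (a₀,a₁)`) and `C_∞` (for `none`). -/
def cls4 (p : ℕ) (D : ZMod p) :
    Option (ZMod p × ZMod p) → Set (ZMod p × ZMod p × ZMod p × ZMod p)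
  | some a => {w | ∃ b₀ b₁ : ZMod p,
      w = (2 * b₀, a.1 * b₀ + a.2 * b₁ * D, 2 * b₁ * D, a.1 * b₁ + a.2 * b₀)}
  | none => {w | ∃ b₀ b₁ : ZMod p, w = (0, b₀, 0, b₁)}

theorem cls4_properties (p : ℕ) (hp : p.Prime) (hodd : Odd p)
    (D : ZMod p) (hD : ∀ k : ZMod p, D ≠ k ^ 2) :
    (∀ t : Option (ZMod p × ZMod p), (cls4 p D t).ncard = p ^ 2) ∧
    (∀ t t' : Option (ZMod p × ZMod p), t ≠ t' →
      cls4 p D t ∩ cls4 p D t' =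
        {((0 : ZMod p), (0 : ZMod p), (0 : ZMod p), (0 : ZMod p))}) ∧
    (∀ t : Option (ZMod p × ZMod p), ∀ w₁ ∈ cls4 p D t, ∀ w₂ ∈ cls4 p D t,
      symp4 p w₁ w₂ = 0) := by
  haveI := Fact.mk hp
  have h2 : (2 : ZMod p) ≠ 0 := by
    have : ¬ (p ∣ 2) := by
      intro h
      have := (Nat.prime_dvd_prime_iff_eq hp Nat.prime_two).mp h
      rw [this] at hodd
      exact (Nat.not_odd_iff_even.mpr (by norm_num)) hodd
    intro h0
    apply this
    have : ((2 : ℕ) : ZMod p) = 0 := by exact_mod_cast h0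
    exact (ZMod.natCast_eq_zero_iff 2 p).mp this
  have hD0 : D ≠ 0 := by
    intro h
    exact hD 0 (by simp [h])
  have key : ∀ b₀ b₁ : ZMod p, b₀ * b₀ - D * (b₁ * b₁) = 0 → b₀ = 0 ∧ b₁ = 0 := by
    intro b₀ b₁ h
    by_cases hb1 : b₁ = 0
    · subst hb1
      refine ⟨?_, rfl⟩
      have : b₀ * b₀ = 0 := by linear_combination h
      exact mul_self_eq_zero.mp this
    · exfalso
      apply hD (b₀ * b₁⁻¹)
      field_simp
      linear_combination -h
  -- the parametrizing functions
  set f : ZMod p × ZMod p → ZMod p × ZMod p → ZMod p × ZMod p × ZMod p × ZMod p :=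
    fun a b => (2 * b.1, a.1 * b.1 + a.2 * b.2 * D, 2 * b.2 * D, a.1 * b.2 + a.2 * b.1)
    with hf
  set g : ZMod p × ZMod p → ZMod p × ZMod p × ZMod p × ZMod p :=
    fun b => (0, b.1, 0, b.2) with hg
  have hinjf : ∀ a, Function.Injective (f a) := by
    intro a b c h
    simp only [hf, Prod.mk.injEq] at h
    obtain ⟨h1, _, h3, _⟩ := h
    have hb1 : b.1 = c.1 := mul_left_cancel₀ h2 h1
    have hb2 : b.2 = c.2 := mul_left_cancel₀ h2 (mul_right_cancel₀ hD0 h3)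
    exact Prod.ext hb1 hb2
  have hinjg : Function.Injective g := by
    intro b c h
    simp only [hg, Prod.mk.injEq] at h
    exact Prod.ext h.2.1 h.2.2.2
  have hcard : Nat.card (ZMod p × ZMod p) = p ^ 2 := by
    simp [Nat.card_eq_fintype_card, ZMod.card, sq]
  refine ⟨?_, ?_, ?_⟩
  · intro t
    match t with
    | some a =>
      have : cls4 p D (some a) = Set.range (f a) := by
        ext w
        simp only [cls4, Set.mem_setOf_eq, Set.mem_range, hf]
        constructor
        · rintro ⟨b₀, b₁, rfl⟩; exact ⟨(b₀, b₁), rfl⟩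
        · rintro ⟨b, rfl⟩; exact ⟨b.1, b.2, rfl⟩
      rw [this, ← Set.image_univ, Set.ncard_image_of_injective _ (hinjf a), Set.ncard_univ, hcard]
    | none =>
      have : cls4 p D none = Set.range g := by
        ext w
        simp only [cls4, Set.mem_setOf_eq, Set.mem_range, hg]
        constructor
        · rintro ⟨b₀, b₁, rfl⟩; exact ⟨(b₀, b₁), rfl⟩
        · rintro ⟨b, rfl⟩; exact ⟨b.1, b.2, rfl⟩
      rw [this, ← Set.image_univ, Set.ncard_image_of_injective _ hinjg, Set.ncard_univ, hcard]
  · intro t t' hne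
    ext w
    simp only [Set.mem_inter_iff, Set.mem_singleton_iff]
    constructor
    · rintro ⟨hw1, hw2⟩
      match t, t' with
      | none, none => exact absurd rfl hne
      | none, some a =>
        obtain ⟨b₀, b₁, rfl⟩ := hw1
        obtain ⟨c₀, c₁, hc⟩ := hw2
        simp only [Prod.mk.injEq] at hc
        obtain ⟨h1, h2', h3, h4⟩ := hc
        have hc0 : c₀ = 0 := by
          have := mul_left_cancel₀ h2 (show 2 * c₀ = 2 * 0 by rw [← h1]; ring)
          simpa using this
        have hc1 : c₁ = 0 := by
          have := mul_right_cancel₀ hD0 (show 2 * c₁ * D = 2 * 0 * D by rw [← h3]; ring)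
          exact mul_left_cancel₀ h2 this
        subst hc0 hc1
        simp only [h2', h4]
        norm_num
      | some a, none =>
        obtain ⟨b₀, b₁, rfl⟩ := hw2
        obtain ⟨c₀, c₁, hc⟩ := hw1
        simp only [Prod.mk.injEq] at hc
        obtain ⟨h1, h2', h3, h4⟩ := hc
        have hc0 : c₀ = 0 := by
          have := mul_left_cancel₀ h2 (show 2 * c₀ = 2 * 0 by rw [← h1]; ring)
          simpa using this
        have hc1 : c₁ = 0 := by
          have := mul_right_cancel₀ hD0 (show 2 * c₁ * D = 2 * 0 * D by rw [← h3]; ring)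
          exact mul_left_cancel₀ h2 this
        subst hc0 hc1
        simp only [h2', h4]
        norm_num
      | some a, some a' =>
        obtain ⟨b₀, b₁, rfl⟩ := hw1
        obtain ⟨c₀, c₁, hc⟩ := hw2
        simp only [Prod.mk.injEq] at hc
        obtain ⟨h1, h2', h3, h4⟩ := hc
        have hb0 : b₀ = c₀ := mul_left_cancel₀ h2 h1
        have hb1 : b₁ = c₁ := mul_left_cancel₀ h2 (mul_right_cancel₀ hD0 h3)
        subst hb0 hb1
        -- equations among a, a'
        by_cases hd : b₀ * b₀ - D * (b₁ * b₁) = 0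
        · obtain ⟨e0, e1⟩ := key b₀ b₁ hd
          subst e0 e1
          norm_num
        · exfalso
          apply hne
          have hc1 : (a.1 - a'.1) * (b₀ * b₀ - D * (b₁ * b₁)) = 0 := by
            linear_combination b₀ * h2' - D * b₁ * h4
          have hc2 : (a.2 - a'.2) * (b₀ * b₀ - D * (b₁ * b₁)) = 0 := by
            linear_combination b₀ * h4 - b₁ * h2'
          have e1 : a.1 = a'.1 := sub_eq_zero.mp ((mul_eq_zero.mp hc1).resolve_right hd)
          have e2 : a.2 = a'.2 := sub_eq_zero.mp ((mul_eq_zero.mp hc2).resolve_right hd)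
          rw [Prod.ext e1 e2]
    · rintro rfl
      constructor
      · match t with
        | some a => exact ⟨0, 0, by norm_num⟩
        | none => exact ⟨0, 0, rfl⟩
      · match t' with
        | some a => exact ⟨0, 0, by norm_num⟩
        | none => exact ⟨0, 0, rfl⟩
  · intro t w₁ hw₁ w₂ hw₂
    match t with
    | some a =>
      obtain ⟨b₀, b₁, rfl⟩ := hw₁
      obtain ⟨c₀, c₁, rfl⟩ := hw₂
      simp only [symp4]
      ring
    | none =>
      obtain ⟨b₀, b₁, rfl⟩ := hw₁
      obtain ⟨c₀, c₁, rfl⟩ := hw₂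
      simp only [symp4]
      ring
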